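/- Let F be a field of characteristic 0. For every X ∈ 𝔤𝔰𝔭₄(F) there exist lower-triangular 2×2 matrices Y₁, Y₂ over F with tr Y₁ = tr Y₂, and an upper-triangular matrix Z ∈ 𝔤𝔰𝔭₄(F), such that X = dι(Y₁,Y₂) + u_B·Z·u_B⁻¹. (This is the tangent-space statement that the lower-triangular Borel subgroup of H acts on the flag variety GSp₄/B_G with an open orbit represented by u_B.) -/

import Mathlib

open Matrix

/-!
Conjugation by `uB` preserves `𝔤𝔰𝔭₄`, because `uBᵀ J uB = J`. So it suffices to choose lower
triangular `Y₁, Y₂` with equal traces such that `uB⁻¹ (X - dι(Y₁, Y₂)) uB` is upper triangular,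
and to take this matrix as `Z`. By the relations defining `𝔤𝔰𝔭₄`, upper triangularity amounts
to four linear conditions on the five-dimensional space of admissible pairs `(Y₁, Y₂)`, and they
have a solution given by integral linear formulas in the entries of `X`.
-/

/-- The standard antisymmetric matrix `J` defining `GSp₄`. -/
def Jmat (R : Type*) [CommRing R] : Matrix (Fin 4) (Fin 4) R :=
  !![0, 0, 0, 1;
     0, 0, 1, 0;
     0, -1, 0, 0;
     -1, 0, 0, 0]

/-- The derivative of the embedding `ι : H → GSp₄`, on pairs of 2×2 matrices. -/
def diota {R : Type*} [CommRing R] (Y₁ Y₂ : Matrix (Fin 2) (Fin 2) R) :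
    Matrix (Fin 4) (Fin 4) R :=
  !![Y₁ 0 0, 0, 0, Y₁ 0 1;
     0, Y₂ 0 0, Y₂ 0 1, 0;
     0, Y₂ 1 0, Y₂ 1 1, 0;
     Y₁ 1 0, 0, 0, Y₁ 1 1]

/-- The representative `u_B` of the open orbit of the lower Borel of `H` on `G/B_G`. -/
def uB (R : Type*) [CommRing R] : Matrix (Fin 4) (Fin 4) R :=
  !![1, 0, 0, 0;
     1, 1, 0, 0;
     0, 1, 1, 0;
     0, -1, -1, 1]


section GSp

variable {n R : Type*} [Fintype n] [CommRing R]

def IsGSp (J : Matrix n n R) (lam : R) (W : Matrix n n R) : Prop :=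
  Wᵀ * J + J * W = lam • J

theorem IsGSp.sub {J W V : Matrix n n R} {lam mu : R} (hW : IsGSp J lam W) (hV : IsGSp J mu V) :
    IsGSp J (lam - mu) (W - V) := by
  unfold IsGSp at *
  rw [Matrix.transpose_sub, Matrix.sub_mul, Matrix.mul_sub, sub_smul, ← hW, ← hV]
  abel

theorem IsGSp.conj [DecidableEq n] {J g g' W : Matrix n n R} {lam : R} (hW : IsGSp J lam W)
    (hg : gᵀ * J * g = J) (hgg' : g * g' = 1) : IsGSp J lam (g' * W * g) := by
  have hleft : g'ᵀ * J = J * g := by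
    conv_lhs => rw [← hg]
    rw [← Matrix.mul_assoc, ← Matrix.mul_assoc, ← Matrix.transpose_mul, hgg',
      Matrix.transpose_one, Matrix.one_mul]
  have hright : J * g' = gᵀ * J := by
    conv_lhs => rw [← hg]
    rw [Matrix.mul_assoc, hgg', Matrix.mul_one]
  calc (g' * W * g)ᵀ * J + J * (g' * W * g)
      = gᵀ * Wᵀ * (g'ᵀ * J) + (J * g') * W * g := by
        simp only [Matrix.transpose_mul, Matrix.mul_assoc]
    _ = gᵀ * (Wᵀ * J + J * W) * g := by
        rw [hleft, hright]
        simp only [Matrix.mul_add, Matrix.add_mul, Matrix.mul_assoc]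
    _ = lam • J := by rw [hW, Matrix.mul_smul, Matrix.smul_mul, hg]

end GSp

section GSp4

variable {R : Type*} [CommRing R]

theorem IsGSp.entries {X : Matrix (Fin 4) (Fin 4) R} {lam : R} (hX : IsGSp (Jmat R) lam X) :
    X 2 0 = X 3 1 ∧ X 3 2 = -X 1 0 ∧ X 2 3 = -X 0 1 ∧ X 1 3 = X 0 2 ∧
      X 3 3 = lam - X 0 0 ∧ X 2 2 = lam - X 1 1 := by
  have entry (i j : Fin 4) := congrFun (congrFun hX i) j
  have h01 := entry 0 1
  have h02 := entry 0 2
  have h13 := entry 1 3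
  have h23 := entry 2 3
  have h03 := entry 0 3
  have h12 := entry 1 2
  simp [Jmat, Matrix.mul_apply, Matrix.vecMul, dotProduct, Fin.sum_univ_four]
    at h01 h02 h13 h23 h03 h12
  exact ⟨by linear_combination -h01, by linear_combination h02, by linear_combination h13,
    by linear_combination -h23, by linear_combination h03, by linear_combination h12⟩

theorem isGSp_diota {Y₁ Y₂ : Matrix (Fin 2) (Fin 2) R} (htr : Y₁.trace = Y₂.trace) :
    IsGSp (Jmat R) Y₁.trace (diota Y₁ Y₂) := by
  simp only [IsGSp, Matrix.trace_fin_two] at htr ⊢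
  ext i j
  fin_cases i <;> fin_cases j <;> simp [diota, Jmat, Matrix.mul_apply, Fin.sum_univ_four]
  all_goals first | linear_combination htr | linear_combination -htr

def uBInv (R : Type*) [CommRing R] : Matrix (Fin 4) (Fin 4) R :=
  !![1, 0, 0, 0;
     -1, 1, 0, 0;
     1, -1, 1, 0;
     0, 0, 1, 1]

theorem uB_mul_uBInv : uB R * uBInv R = 1 := by
  ext i j
  fin_cases i <;> fin_cases j <;> simp [uB, uBInv, Matrix.mul_apply, Fin.sum_univ_four]

theorem inv_uB {F : Type*} [Field F] : (uB F)⁻¹ = uBInv F :=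
  Matrix.inv_eq_right_inv uB_mul_uBInv

theorem transpose_uB_mul_Jmat_mul_uB : (uB R)ᵀ * Jmat R * uB R = Jmat R := by
  ext i j
  fin_cases i <;> fin_cases j <;> simp [uB, Jmat, Matrix.mul_apply, Fin.sum_univ_four]

/- Solving for the vanishing of the strictly lower entries of `openOrbitZ X` determines `Y₁, Y₂`
up to adding the same scalar matrix to both; the formulas below fix it by `openOrbitZ X 0 0 = 0`. -/
def openOrbitY₁ (X : Matrix (Fin 4) (Fin 4) R) : Matrix (Fin 2) (Fin 2) R :=
  !![X 0 0 + X 0 1, 0;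
     X 3 0 + X 3 1, X 0 1 + X 0 2 - X 0 3 + X 1 0 - X 1 2 + X 1 3 - X 2 0 - X 3 2 + X 3 3]

def openOrbitY₂ (X : Matrix (Fin 4) (Fin 4) R) : Matrix (Fin 2) (Fin 2) R :=
  !![X 1 0 + X 1 1, 0;
     X 2 0 + X 2 1, X 0 1 + X 0 2 - X 0 3 + X 1 0 - X 1 2 + X 1 3 - X 2 0 + X 2 2 - X 2 3]

def openOrbitZ (X : Matrix (Fin 4) (Fin 4) R) : Matrix (Fin 4) (Fin 4) R :=
  uBInv R * (X - diota (openOrbitY₁ X) (openOrbitY₂ X)) * uB R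

theorem trace_openOrbitY₁_eq {X : Matrix (Fin 4) (Fin 4) R} {lam : R}
    (hX : IsGSp (Jmat R) lam X) : (openOrbitY₁ X).trace = (openOrbitY₂ X).trace := by
  obtain ⟨-, h32, h23, -, h33, h22⟩ := hX.entries
  simp only [Matrix.trace_fin_two, openOrbitY₁, openOrbitY₂, Matrix.of_apply, Matrix.cons_val',
    Matrix.cons_val_zero, Matrix.cons_val_one, Matrix.empty_val', Matrix.cons_val_fin_one]
  rw [h32, h23, h33, h22]
  ring

theorem openOrbitZ_apply_eq_zero_of_lt {X : Matrix (Fin 4) (Fin 4) R} {lam : R}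
    (hX : IsGSp (Jmat R) lam X) {i j : Fin 4} (hji : j < i) : openOrbitZ X i j = 0 := by
  obtain ⟨h20, h32, h23, h13, h33, h22⟩ := hX.entries
  fin_cases i <;> fin_cases j <;> simp at hji <;>
    simp [openOrbitZ, openOrbitY₁, openOrbitY₂, diota, uB, uBInv, Matrix.mul_apply,
      Matrix.vecMul, dotProduct, Fin.sum_univ_four, h20, h32, h23, h13, h33, h22] <;> ring

theorem isGSp_openOrbitZ {X : Matrix (Fin 4) (Fin 4) R} {lam : R} (hX : IsGSp (Jmat R) lam X) :
    IsGSp (Jmat R) (lam - (openOrbitY₁ X).trace) (openOrbitZ X) :=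
  (hX.sub (isGSp_diota (trace_openOrbitY₁_eq hX))).conj transpose_uB_mul_Jmat_mul_uB uB_mul_uBInv

theorem uB_mul_openOrbitZ_mul_uBInv (X : Matrix (Fin 4) (Fin 4) R) :
    uB R * openOrbitZ X * uBInv R = X - diota (openOrbitY₁ X) (openOrbitY₂ X) := by
  rw [openOrbitZ, ← Matrix.mul_assoc, ← Matrix.mul_assoc, uB_mul_uBInv, Matrix.one_mul,
    Matrix.mul_assoc, uB_mul_uBInv, Matrix.mul_one]

end GSp4

theorem lie_algebra_open_orbit_general (F : Type*) [Field F]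
    (X : Matrix (Fin 4) (Fin 4) F)
    (hX : ∃ lam : F, Xᵀ * Jmat F + Jmat F * X = lam • Jmat F) :
    ∃ (Y₁ Y₂ : Matrix (Fin 2) (Fin 2) F) (Z : Matrix (Fin 4) (Fin 4) F),
      Y₁ 0 1 = 0 ∧ Y₂ 0 1 = 0 ∧ Y₁.trace = Y₂.trace ∧
      (∀ i j : Fin 4, j < i → Z i j = 0) ∧
      (∃ mu : F, Zᵀ * Jmat F + Jmat F * Z = mu • Jmat F) ∧
      X = diota Y₁ Y₂ + uB F * Z * (uB F)⁻¹ := by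
  obtain ⟨lam, hX⟩ := hX
  refine ⟨openOrbitY₁ X, openOrbitY₂ X, openOrbitZ X, rfl, rfl, trace_openOrbitY₁_eq hX,
    fun i j => openOrbitZ_apply_eq_zero_of_lt hX, ⟨_, isGSp_openOrbitZ hX⟩, ?_⟩
  rw [inv_uB, uB_mul_openOrbitZ_mul_uBInv, add_sub_cancel]

/-- The Lie-algebra-theoretic open-orbit statement: every element of `𝔤𝔰𝔭₄` is the sum of
an element of the lower Borel subalgebra of `Lie H` and a `u_B`-conjugate of an element of
the upper Borel subalgebra of `𝔤𝔰𝔭₄`. -/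
theorem lie_algebra_open_orbit (F : Type*) [Field F] [CharZero F]
    (X : Matrix (Fin 4) (Fin 4) F)
    (hX : ∃ lam : F, Xᵀ * Jmat F + Jmat F * X = lam • Jmat F) :
    ∃ (Y₁ Y₂ : Matrix (Fin 2) (Fin 2) F) (Z : Matrix (Fin 4) (Fin 4) F),
      Y₁ 0 1 = 0 ∧ Y₂ 0 1 = 0 ∧ Y₁.trace = Y₂.trace ∧
      (∀ i j : Fin 4, j < i → Z i j = 0) ∧
      (∃ mu : F, Zᵀ * Jmat F + Jmat F * Z = mu • Jmat F) ∧
      X = diota Y₁ Y₂ + uB F * Z * (uB F)⁻¹ :=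
  lie_algebra_open_orbit_general F X hX
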